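/- arXiv:2603.27258 — 2 statements merged into one kernel-verified Lean document; each statement's English description precedes it below -/
import Mathlib

section
/- Let (X, B, μ, T) and (Y, C, ν, S) be measure-preserving systems, and let λ be a (T × S)-invariant probability measure on X × Y whose marginals are μ and ν, respectively. If f ∈ L²(X, B, μ) is weak mixing for T, then f ⊗ 1 ∈ L²(X × Y, λ) is weak mixing for T × S. -/
open MeasureTheory Filter Topology Pointwise

noncomputable section

/-- A Følner sequence in ℕ: finite sets Φ_N with |Φ_N ∩ (Φ_N + 1)|/|Φ_N| → 1. -/
def Folner (Φ : ℕ → Finset ℕ) : Prop :=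
  Tendsto (fun N => ((Φ N ∩ (Φ N).image (· + 1)).card : ℝ) / (Φ N).card) atTop (𝓝 1)

/-- x is generic for μ along Φ: ergodic averages of continuous functions converge to the integral. -/
def GenericAlong {X : Type*} [TopologicalSpace X] [MeasurableSpace X]
    (T : X → X) (x : X) (μ : Measure X) (Φ : ℕ → Finset ℕ) : Prop :=
  ∀ f : C(X, ℂ), Tendsto (fun N => (∑ n ∈ Φ N, f (T^[n] x)) / ((Φ N).card : ℂ))
    atTop (𝓝 (∫ y, f y ∂μ))

/-- f is a weak mixing function for the system (μ, S): averaged correlations with every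
L² function vanish along every Følner sequence. -/
def WeakMixingFn {α : Type*} [MeasurableSpace α] (S : α → α) (μ : Measure α) (f : α → ℂ) : Prop :=
  ∀ g : α → ℂ, MemLp g 2 μ → ∀ Φ : ℕ → Finset ℕ, Folner Φ →
    Tendsto (fun N => (∑ n ∈ Φ N,
        ‖∫ x, f (S^[n] x) * (starRingEnd ℂ) (g x) ∂μ‖) / (Φ N).card)
      atTop (𝓝 0)

theorem stmt7 {X Y : Type*} [MeasurableSpace X] [MeasurableSpace Y]
    (μ : Measure X) (ν : Measure Y) [IsProbabilityMeasure μ] [IsProbabilityMeasure ν]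
    (T : X → X) (S : Y → Y) (hT : MeasurePreserving T μ μ) (hS : MeasurePreserving S ν ν)
    (lam : Measure (X × Y)) [IsProbabilityMeasure lam]
    (hInv : MeasurePreserving (Prod.map T S) lam lam)
    (h1 : lam.map Prod.fst = μ) (h2 : lam.map Prod.snd = ν)
    (f : X → ℂ) (hf : MemLp f 2 μ) (hfwm : WeakMixingFn T μ f) :
    WeakMixingFn (Prod.map T S) lam (fun p => f p.1) := by
  intro g hg Φ hΦ
  have hm : MeasurableSpace.comap (Prod.fst : X × Y → X) inferInstance
      ≤ Prod.instMeasurableSpace := measurable_fst.comap_le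
  have hfstmp : MeasurePreserving (Prod.fst : X × Y → X) lam μ := ⟨measurable_fst, h1⟩
  -- measurable representative of f
  obtain ⟨f', hf'sm, hff'⟩ := hf.aestronglyMeasurable
  -- L² conditional expectation of g with respect to σ(fst)
  set Glp : Lp ℂ 2 lam := hg.toLp g with hGlp_def
  set F : Lp ℂ 2 lam := (condExpL2 ℂ ℂ hm Glp : Lp ℂ 2 lam) with hF_def
  obtain ⟨F', hF'sm, hFF'⟩ := aestronglyMeasurable_condExpL2 (𝕜 := ℂ) hm Glp
  -- Y is nonempty
  have hY : Nonempty Y := by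
    rcases isEmpty_or_nonempty Y with hE | hY
    · have h := measure_univ (μ := ν)
      rw [Set.univ_eq_empty_iff.2 hE, measure_empty] at h
      exact absurd h (by simp)
    · exact hY
  obtain ⟨y0⟩ := hY
  set h : X → ℂ := fun x => F' (x, y0) with hh_def
  -- F' factors through the first coordinate
  have hfac : ∀ p : X × Y, F' p = h p.1 := by
    rintro ⟨x, y⟩
    have hs := hF'sm.measurable (MeasurableSet.singleton (F' (x, y)))
    obtain ⟨A, hA, hAeq⟩ := hs
    have hx : (x, y) ∈ Prod.fst ⁻¹' A := by rw [hAeq]; exact rfl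
    have hx0 : (x, y0) ∈ Prod.fst ⁻¹' A := hx
    rw [hAeq] at hx0
    exact hx0.symm
  have hmap : @Measurable X (X × Y) _
      (MeasurableSpace.comap (Prod.fst : X × Y → X) inferInstance) (fun x => (x, y0)) := by
    intro s hs
    obtain ⟨A, hA, rfl⟩ := hs
    exact hA
  have hhm : Measurable h := hF'sm.measurable.comp hmap
  have hFh : (F : X × Y → ℂ) =ᵐ[lam] fun p => h p.1 :=
    hFF'.trans (Filter.Eventually.of_forall fun p => hfac p)
  have hcomp2 : MemLp (fun p : X × Y => h p.1) 2 lam := (Lp.memLp F).ae_eq hFh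
  have hh2 : MemLp h 2 μ := by
    rw [← h1]
    exact (memLp_map_measure_iff hhm.stronglyMeasurable.aestronglyMeasurable
      measurable_fst.aemeasurable).2 hcomp2
  -- the key integral identity
  have key : ∀ n : ℕ,
      ∫ x, f ((Prod.map T S)^[n] x).1 * (starRingEnd ℂ) (g x) ∂lam
        = ∫ x, f (T^[n] x) * (starRingEnd ℂ) (h x) ∂μ := by
    intro n
    have hTn : MeasurePreserving (fun p : X × Y => T^[n] p.1) lam μ :=
      (hT.iterate n).comp hfstmp
    set ψ : X × Y → ℂ := fun p => f' (T^[n] p.1) with hψ_def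
    have hψsm : StronglyMeasurable[MeasurableSpace.comap (Prod.fst : X × Y → X) inferInstance] ψ :=
      hf'sm.comp_measurable ((hT.iterate n).measurable.comp (comap_measurable Prod.fst))
    have hψ2 : MemLp ψ 2 lam := (hf.ae_eq hff').comp_measurePreserving hTn
    set ψlp : Lp ℂ 2 lam := hψ2.toLp ψ with hψlp_def
    have hψ' : AEStronglyMeasurable[MeasurableSpace.comap (Prod.fst : X × Y → X) inferInstance]
        (ψlp : X × Y → ℂ) lam := ⟨ψ, hψsm, hψ2.coeFn_toLp⟩
    have hinner := inner_condExpL2_eq_inner_fun (E := ℂ) (𝕜 := ℂ) hm Glp ψlp hψ'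
    -- compute both inner products as integrals
    have hL : (inner (𝕜 := ℂ) (F : Lp ℂ 2 lam) ψlp)
        = ∫ p, (starRingEnd ℂ) (h p.1) * ψ p ∂lam := by
      rw [L2.inner_def]
      refine integral_congr_ae ?_
      filter_upwards [hFh, hψ2.coeFn_toLp] with p hp1 hp2
      rw [RCLike.inner_apply', hp1, hp2]
    have hR : (inner (𝕜 := ℂ) Glp ψlp)
        = ∫ p, (starRingEnd ℂ) (g p) * ψ p ∂lam := by
      rw [L2.inner_def]
      refine integral_congr_ae ?_
      filter_upwards [hg.coeFn_toLp, hψ2.coeFn_toLp] with p hp1 hp2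
      rw [RCLike.inner_apply', hp1, hp2]
    have step1 : ∫ x, f ((Prod.map T S)^[n] x).1 * (starRingEnd ℂ) (g x) ∂lam
        = ∫ p, (starRingEnd ℂ) (g p) * ψ p ∂lam := by
      refine integral_congr_ae ?_
      have hae : (fun p : X × Y => f (T^[n] p.1)) =ᵐ[lam] fun p => f' (T^[n] p.1) :=
        hTn.quasiMeasurePreserving.ae_eq_comp hff'
      filter_upwards [hae] with p hp
      rw [Prod.map_iterate]
      simp only [Prod.map_fst]
      rw [hp, mul_comm]
    have hint_meas : AEStronglyMeasurable (fun x => f' (T^[n] x) * (starRingEnd ℂ) (h x))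
        (Measure.map Prod.fst lam) := by
      rw [h1]
      exact (hf'sm.comp_measurable (hT.iterate n).measurable).aestronglyMeasurable.mul
        (Complex.continuous_conj.measurable.comp hhm).aestronglyMeasurable
    have hmap_int : ∫ y, (fun x => f' (T^[n] x) * (starRingEnd ℂ) (h x)) y ∂(Measure.map Prod.fst lam)
        = ∫ p, f' (T^[n] p.1) * (starRingEnd ℂ) (h p.1) ∂lam :=
      integral_map measurable_fst.aemeasurable hint_meas
    have step2 : ∫ p, (starRingEnd ℂ) (h p.1) * ψ p ∂lam
        = ∫ x, f (T^[n] x) * (starRingEnd ℂ) (h x) ∂μ := by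
      have e1 : ∫ p, (starRingEnd ℂ) (h p.1) * ψ p ∂lam
          = ∫ p, f' (T^[n] p.1) * (starRingEnd ℂ) (h p.1) ∂lam := by
        refine integral_congr_ae (Filter.Eventually.of_forall fun p => ?_)
        simp [ψ, mul_comm]
      have e2 : ∫ x, f' (T^[n] x) * (starRingEnd ℂ) (h x) ∂μ
          = ∫ x, f (T^[n] x) * (starRingEnd ℂ) (h x) ∂μ := by
        refine integral_congr_ae ?_
        have hae : (fun x => f' (T^[n] x)) =ᵐ[μ] fun x => f (T^[n] x) :=
          (hT.iterate n).quasiMeasurePreserving.ae_eq_comp hff'.symm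
        filter_upwards [hae] with x hx
        rw [hx]
      rw [e1, ← hmap_int, h1, e2]
    rw [step1, ← hR, ← hinner, hL, step2]
  -- conclude
  have heq : (fun N => (∑ n ∈ Φ N,
        ‖∫ x, (fun p : X × Y => f p.1) ((Prod.map T S)^[n] x)
          * (starRingEnd ℂ) (g x) ∂lam‖) / ((Φ N).card : ℝ))
      = fun N => (∑ n ∈ Φ N,
        ‖∫ x, f (T^[n] x) * (starRingEnd ℂ) (h x) ∂μ‖) / ((Φ N).card : ℝ) := by
    funext N
    congr 1
    exact Finset.sum_congr rfl fun n _ => by rw [← key n]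
  rw [show (fun N => (∑ n ∈ Φ N,
        ‖∫ x, (fun p : X × Y => f p.1) ((Prod.map T S)^[n] x)
          * (starRingEnd ℂ) (g x) ∂lam‖) / ((Φ N).card : ℝ))
      = _ from heq]
  exact hfwm h hh2 Φ hΦ
end
end

section
/- Let X be a compact metric space, T : X → X continuous, E ⊆ X clopen, and x ∈ X. Suppose b₁ < b₂ < ⋯ and c₁ < c₂ < ⋯ are sequences in ℕ such that both iterated limits lim_{j→∞} lim_{i→∞} T^{b_i+c_j} x and lim_{i→∞} lim_{j→∞} T^{b_i+c_j} x exist and belong to E (with all inner limits existing). Then there exist subsequences (b'_i) of (b_i) and (c'_j) of (c_j) such that T^{b'_i + c'_j} x ∈ E for all i, j ∈ ℕ. -/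
open MeasureTheory Filter Topology Pointwise

noncomputable section

theorem stmt11 {X : Type*} [MetricSpace X] [CompactSpace X]
    (T : X → X) (hT : Continuous T) (E : Set X) (hE : IsClopen E) (x : X)
    (b c : ℕ → ℕ) (hb : StrictMono b) (hc : StrictMono c)
    (u v : ℕ → X) (p q : X)
    (hu : ∀ j, Tendsto (fun i => T^[b i + c j] x) atTop (𝓝 (u j)))
    (hup : Tendsto u atTop (𝓝 p)) (hpE : p ∈ E)
    (hv : ∀ i, Tendsto (fun j => T^[b i + c j] x) atTop (𝓝 (v i)))
    (hvq : Tendsto v atTop (𝓝 q)) (hqE : q ∈ E) :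
    ∃ φ ψ : ℕ → ℕ, StrictMono φ ∧ StrictMono ψ ∧
      ∀ i j, T^[b (φ i) + c (ψ j)] x ∈ E := by
  -- eventually u j ∈ E and v i ∈ E
  obtain ⟨J, hJ⟩ := (hup.eventually (hE.isOpen.eventually_mem hpE)).exists_forall_of_atTop
  obtain ⟨I, hI⟩ := (hvq.eventually (hE.isOpen.eventually_mem hqE)).exists_forall_of_atTop
  set P : ℕ × ℕ → Prop := fun a => I ≤ a.1 ∧ J ≤ a.2 ∧ T^[b a.1 + c a.2] x ∈ E with hP
  set r : ℕ × ℕ → ℕ × ℕ → Prop := fun a d =>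
    a.1 < d.1 ∧ a.2 < d.2 ∧ T^[b a.1 + c d.2] x ∈ E ∧ T^[b d.1 + c a.2] x ∈ E with hr
  have key : ∀ s : Finset (ℕ × ℕ), (∀ a ∈ s, P a) → ∃ d, P d ∧ ∀ a ∈ s, r a d := by
    intro s hs
    -- choose second coordinate ψ' first
    have h1 : ∀ᶠ m in atTop, J ≤ m ∧ (∀ a ∈ s, a.2 < m ∧ T^[b a.1 + c m] x ∈ E) := by
      refine (eventually_ge_atTop J).and ?_
      rw [eventually_all_finset]
      intro a ha
      refine (eventually_gt_atTop a.2).and ?_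
      have hva : v a.1 ∈ E := hI a.1 (hs a ha).1
      exact (hv a.1).eventually (hE.isOpen.eventually_mem hva)
    obtain ⟨m, hmJ, hm⟩ := h1.exists
    have humE : u m ∈ E := hJ m hmJ
    have h2 : ∀ᶠ n in atTop, I ≤ n ∧ T^[b n + c m] x ∈ E ∧
        (∀ a ∈ s, a.1 < n ∧ T^[b n + c a.2] x ∈ E) := by
      refine (eventually_ge_atTop I).and ?_
      refine ((hu m).eventually (hE.isOpen.eventually_mem humE)).and ?_
      rw [eventually_all_finset]
      intro a ha
      refine (eventually_gt_atTop a.1).and ?_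
      have hua : u a.2 ∈ E := hJ a.2 (hs a ha).2.1
      exact (hu a.2).eventually (hE.isOpen.eventually_mem hua)
    obtain ⟨n, hnI, hnm, hn⟩ := h2.exists
    refine ⟨(n, m), ⟨hnI, hmJ, hnm⟩, fun a ha => ?_⟩
    exact ⟨(hn a ha).1, (hm a ha).1, (hm a ha).2, (hn a ha).2⟩
  obtain ⟨f, hfP, hfr⟩ := exists_seq_of_forall_finset_exists P r key
  refine ⟨fun n => (f n).1, fun n => (f n).2, ?_, ?_, ?_⟩
  · exact strictMono_nat_of_lt_succ fun n => (hfr n (n + 1) (Nat.lt_succ_self n)).1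
  · exact strictMono_nat_of_lt_succ fun n => (hfr n (n + 1) (Nat.lt_succ_self n)).2.1
  · intro i j
    rcases lt_trichotomy i j with h | h | h
    · exact (hfr i j h).2.2.1
    · subst h; exact (hfP i).2.2
    · exact (hfr j i h).2.2.2
end
end
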